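/- Suppose ‖x_i‖_1 ≤ R for all i ∈ {1,…,n}, where R > 0, and that n = m·b for integers m ≥ 1 and b ≥ 1. Fix η_0 > 0 and let 0 < η ≤ η_0. Let W ∈ ℝ^{k×d}, let B ⊆ {1,…,n} with |B| = b, and set ∇L_B(W) = (1/b)∑_{i∈B} g_i(W). Let Δ ∈ ℝ^{k×d} be any ℓ_∞ steepest descent direction for the mini-batch gradient, i.e., ‖Δ‖_max ≤ 1 and ⟨∇L_B(W), Δ⟩ = ‖∇L_B(W)‖_1. Then the cross-entropy loss satisfies the descent inequality L(W − ηΔ) ≤ L(W) − η (γ − 4(m−1)R − 2η R² e^{2Rη_0}) · G(W), where γ = sup{ min_{i ∈ {1,…,n}, c ≠ y_i} (e_{y_i} − e_c)ᵀ W' x_i : W' ∈ ℝ^{k×d}, ‖W'‖_max ≤ 1 }. -/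

import Mathlib

open Finset Filter

/-- Softmax map on `ℝ^k`. -/
noncomputable def softmax {k : ℕ} (z : Fin k → ℝ) (c : Fin k) : ℝ :=
  Real.exp (z c) / ∑ j, Real.exp (z j)

/-- Logits `W x` of a linear classifier `W : ℝ^{k×d}` on input `x : ℝ^d`. -/
noncomputable def logits {k d : ℕ} (W : Fin k → Fin d → ℝ) (x : Fin d → ℝ) : Fin k → ℝ :=
  fun c => ∑ j, W c j * x j

/-- Cross-entropy loss `L(W) = -(1/n) ∑ᵢ log S_{yᵢ}(W xᵢ)`. -/
noncomputable def lossCE {n k d : ℕ} (x : Fin n → Fin d → ℝ) (y : Fin n → Fin k)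
    (W : Fin k → Fin d → ℝ) : ℝ :=
  -((1 : ℝ) / n) * ∑ i, Real.log (softmax (logits W (x i)) (y i))

/-- Proxy function `G(W) = (1/n) ∑ᵢ (1 - S_{yᵢ}(W xᵢ))`. -/
noncomputable def proxyG {n k d : ℕ} (x : Fin n → Fin d → ℝ) (y : Fin n → Fin k)
    (W : Fin k → Fin d → ℝ) : ℝ :=
  ((1 : ℝ) / n) * ∑ i, (1 - softmax (logits W (x i)) (y i))

/-- Per-sample gradient matrix `gᵢ(W) = (S(W xᵢ) - e_{yᵢ}) xᵢᵀ`. -/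
noncomputable def sampleGrad {k d : ℕ} (x : Fin d → ℝ) (y : Fin k)
    (W : Fin k → Fin d → ℝ) : Fin k → Fin d → ℝ :=
  fun c j => (softmax (logits W x) c - (if c = y then 1 else 0)) * x j

/-- Full gradient matrix `D(W) = (1/n) ∑ᵢ gᵢ(W)`. -/
noncomputable def gradCE {n k d : ℕ} (x : Fin n → Fin d → ℝ) (y : Fin n → Fin k)
    (W : Fin k → Fin d → ℝ) : Fin k → Fin d → ℝ :=
  fun c j => ((1 : ℝ) / n) * ∑ i, sampleGrad (x i) (y i) W c j

/-- Entry-wise 1-norm of a matrix. -/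
noncomputable def norm1M {k d : ℕ} (A : Fin k → Fin d → ℝ) : ℝ :=
  ∑ c, ∑ j, |A c j|

/-- 1-norm of a vector. -/
noncomputable def norm1V {d : ℕ} (v : Fin d → ℝ) : ℝ := ∑ j, |v j|

/-- `min_{c ≠ y} (e_y - e_c)ᵀ A x`. -/
noncomputable def marginMin {k d : ℕ} (hk : 2 ≤ k) (A : Fin k → Fin d → ℝ)
    (x : Fin d → ℝ) (y : Fin k) : ℝ :=
  (Finset.univ.erase y).inf'
    (by
      obtain ⟨cne, hcne⟩ := Fintype.exists_ne_of_one_lt_card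
        (by simpa using (by omega : 1 < k)) y
      exact ⟨cne, Finset.mem_erase.mpr ⟨hcne, Finset.mem_univ _⟩⟩)
    (fun c => logits A x y - logits A x c)

/-- `min_{i ∈ [n], c ≠ yᵢ} (e_{yᵢ} - e_c)ᵀ W xᵢ`. -/
noncomputable def dataMargin {n k d : ℕ} (hn : 1 ≤ n) (hk : 2 ≤ k)
    (x : Fin n → Fin d → ℝ) (y : Fin n → Fin k) (W : Fin k → Fin d → ℝ) : ℝ :=
  Finset.univ.inf' ⟨⟨0, by omega⟩, Finset.mem_univ _⟩
    (fun i => marginMin hk W (x i) (y i))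

/-- Max margin `γ` over the max-norm unit ball. -/
noncomputable def gammaMax {n k d : ℕ} (hn : 1 ≤ n) (hk : 2 ≤ k)
    (x : Fin n → Fin d → ℝ) (y : Fin n → Fin k) : ℝ :=
  sSup { g : ℝ | ∃ W' : Fin k → Fin d → ℝ, ‖W'‖ ≤ 1 ∧ g = dataMargin hn hk x y W' }

/-- Mini-batch gradient `(1/b) ∑_{i ∈ B} gᵢ(W)`. -/
noncomputable def batchGrad {n k d : ℕ} (x : Fin n → Fin d → ℝ) (y : Fin n → Fin k)
    (B : Finset (Fin n)) (b : ℕ) (W : Fin k → Fin d → ℝ) : Fin k → Fin d → ℝ :=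
  fun c j => ((1 : ℝ) / b) * ∑ i ∈ B, sampleGrad (x i) (y i) W c j

/-- Frobenius norm of a matrix. -/
noncomputable def frobNorm {k d : ℕ} (A : Fin k → Fin d → ℝ) : ℝ :=
  Real.sqrt (∑ c, ∑ j, (A c j) ^ 2)

/-!
The per-sample loss `-log S_y(z)` is a log-sum-exp in the logits `z`. Moving `z` by `v` with
`|v_c| ≤ r` changes it by the first-order term `-⟨S(z) - e_y, v⟩` plus at most
`(2r)²/2 · e^{2r}` times the off-label mass `1 - S_y(z)`, because the label coordinate contributes
no second-order term; averaging these masses gives `G`. For `v = η Δ x` and `r = η R` this yields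
`L(W - ηΔ) ≤ L(W) - η⟨∇L, Δ⟩ + 2η²R²e^{2ηR} G`.

The first-order term is controlled by duality. Every `W'` in the max-norm ball satisfies
`margin(W') · G ≤ -⟨∇L, W'⟩ ≤ ‖∇L‖₁`, hence `γ G ≤ ‖∇L‖₁`. The mini-batch gradient differs from
`∇L` by sample weights of size at most `(m-1)/n`, and `‖g_i‖₁ ≤ 2R(1 - S_{y_i})`, hence
`‖∇L - ∇L_B‖₁ ≤ 2R(m-1) G`. As `Δ` is optimal for `∇L_B`,
`⟨∇L, Δ⟩ ≥ ‖∇L_B‖₁ - ‖∇L - ∇L_B‖₁ ≥ ‖∇L‖₁ - 2‖∇L - ∇L_B‖₁ ≥ (γ - 4(m-1)R) G`.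
-/

open Real

theorem exp_le_one_add_add_sq_div_two_of_nonpos {u : ℝ} (hu : u ≤ 0) :
    exp u ≤ 1 + u + u ^ 2 / 2 := by
  have hderiv (t : ℝ) : HasDerivAt (fun t => 1 + t + t ^ 2 / 2 - exp t) (1 + t - exp t) t :=
    ((((hasDerivAt_id t).const_add 1).add ((hasDerivAt_pow 2 t).div_const 2)).sub
      (hasDerivAt_exp t)).congr_deriv (by simp)
  have hanti : Antitone fun t => 1 + t + t ^ 2 / 2 - exp t :=
    antitone_of_deriv_nonpos (fun t => (hderiv t).differentiableAt)
      fun t => (hderiv t).deriv ▸ by linarith [add_one_le_exp t]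
  simpa using hanti hu

theorem exp_sub_one_sub_le_sq_div_two_mul_exp_of_nonneg {u : ℝ} (hu : 0 ≤ u) :
    exp u - 1 - u ≤ u ^ 2 / 2 * exp u := by
  have hderiv (t : ℝ) : HasDerivAt (fun t => 1 - (1 + t) * exp (-t) - t ^ 2 / 2)
      (t * (exp (-t) - 1)) t :=
    ((((hasDerivAt_id t).const_add 1).mul (hasDerivAt_neg t).exp).const_sub 1 |>.sub
      ((hasDerivAt_pow 2 t).div_const 2)).congr_deriv (by simp; ring)
  have hanti : Antitone fun t => 1 - (1 + t) * exp (-t) - t ^ 2 / 2 := by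
    refine antitone_of_deriv_nonpos (fun t => (hderiv t).differentiableAt) fun t => ?_
    rw [(hderiv t).deriv]
    rcases le_total 0 t with ht | ht
    · exact mul_nonpos_of_nonneg_of_nonpos ht (by simpa using ht)
    · exact mul_nonpos_of_nonpos_of_nonneg ht (by simpa using ht)
  have key : 1 - (1 + u) * exp (-u) ≤ u ^ 2 / 2 := by simpa using hanti hu
  calc exp u - 1 - u = exp u * (1 - (1 + u) * exp (-u)) := by
        rw [mul_sub, mul_left_comm, ← exp_add]; simp; ring
    _ ≤ u ^ 2 / 2 * exp u := by nlinarith [exp_pos u]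

theorem exp_sub_one_sub_le_of_abs_le {u r : ℝ} (h : |u| ≤ r) :
    exp u - 1 - u ≤ r ^ 2 / 2 * exp r := by
  have hsq : u ^ 2 ≤ r ^ 2 := sq_le_sq' (abs_le.mp h).1 (abs_le.mp h).2
  rcases le_total u 0 with hu | hu
  · nlinarith [exp_le_one_add_add_sq_div_two_of_nonpos hu, one_le_exp ((abs_nonneg u).trans h)]
  · have := exp_sub_one_sub_le_sq_div_two_mul_exp_of_nonneg hu
    have : exp u ≤ exp r := exp_le_exp.mpr ((le_abs_self u).trans h)
    nlinarith [exp_pos u]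

section Softmax

variable {k : ℕ}

theorem sum_exp_pos [NeZero k] (z : Fin k → ℝ) : 0 < ∑ j, exp (z j) :=
  Finset.sum_pos (fun _ _ => exp_pos _) Finset.univ_nonempty

theorem softmax_pos (z : Fin k → ℝ) (c : Fin k) : 0 < softmax z c :=
  have : NeZero k := NeZero.of_pos c.pos
  div_pos (exp_pos _) (sum_exp_pos z)

theorem sum_softmax [NeZero k] (z : Fin k → ℝ) : ∑ c, softmax z c = 1 := by
  simp only [softmax, ← Finset.sum_div, div_self (sum_exp_pos z).ne']

theorem sum_erase_softmax (z : Fin k → ℝ) (y : Fin k) :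
    ∑ c ∈ Finset.univ.erase y, softmax z c = 1 - softmax z y := by
  have : NeZero k := NeZero.of_pos y.pos
  rw [← sum_softmax z, ← Finset.add_sum_erase _ _ (Finset.mem_univ y), add_sub_cancel_left]

theorem softmax_lt_one (hk : 2 ≤ k) (z : Fin k → ℝ) (y : Fin k) : softmax z y < 1 := by
  obtain ⟨c, hc⟩ := Fintype.exists_ne_of_one_lt_card (by simpa using (show 1 < k from hk)) y
  have : 0 < ∑ c ∈ Finset.univ.erase y, softmax z c :=
    Finset.sum_pos (fun c _ => softmax_pos z c) ⟨c, by simpa using hc⟩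
  linarith [sum_erase_softmax z y]

theorem softmax_le_one (z : Fin k → ℝ) (y : Fin k) : softmax z y ≤ 1 := by
  linarith [sum_erase_softmax z y,
    Finset.sum_nonneg fun c (_ : c ∈ Finset.univ.erase y) => (softmax_pos z c).le]

theorem sum_softmax_sub_ite_mul (z v : Fin k → ℝ) (y : Fin k) :
    ∑ c, (softmax z c - if c = y then 1 else 0) * v c
      = -∑ c ∈ Finset.univ.erase y, softmax z c * (v y - v c) := by
  have : NeZero k := NeZero.of_pos y.pos
  rw [Finset.sum_erase _ (by simp)]
  simp only [sub_mul, ite_mul, one_mul, zero_mul, Finset.sum_sub_distrib, Finset.sum_ite_eq',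
    Finset.mem_univ, if_true, mul_sub, ← Finset.sum_mul, sum_softmax]
  ring

theorem sum_abs_softmax_sub_ite (z : Fin k → ℝ) (y : Fin k) :
    ∑ c, |softmax z c - if c = y then 1 else 0| = 2 * (1 - softmax z y) := by
  rw [← Finset.add_sum_erase _ _ (Finset.mem_univ y), if_pos rfl,
    abs_of_nonpos (by linarith [softmax_le_one z y]),
    Finset.sum_congr rfl fun c hc => by rw [if_neg (Finset.ne_of_mem_erase hc), sub_zero,
      abs_of_pos (softmax_pos z c)], sum_erase_softmax]
  ring

theorem softmax_div_softmax_sub (z v : Fin k → ℝ) (y : Fin k) :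
    softmax z y / softmax (z - v) y = ∑ j, softmax z j * exp (v y - v j) := by
  have : NeZero k := NeZero.of_pos y.pos
  simp only [softmax, Pi.sub_apply, div_mul_eq_mul_div, ← Finset.sum_div, ← exp_add]
  field_simp
  rw [Finset.mul_sum, Finset.mul_sum]
  exact Finset.sum_congr rfl fun j _ => by rw [← exp_add, ← exp_add]; ring_nf

end Softmax

theorem neg_log_softmax_sub_le {k : ℕ} (z v : Fin k → ℝ) (y : Fin k) {r : ℝ}
    (hv : ∀ c, |v c| ≤ r) :
    -log (softmax (z - v) y)
      ≤ -log (softmax z y) - ∑ c, (softmax z c - if c = y then 1 else 0) * v c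
        + 2 * r ^ 2 * exp (2 * r) * (1 - softmax z y) := by
  have : NeZero k := NeZero.of_pos y.pos
  set T := ∑ j, softmax z j * exp (v y - v j)
  have hT : 0 < T := Finset.sum_pos (fun j _ => mul_pos (softmax_pos z j) (exp_pos _))
    Finset.univ_nonempty
  have hratio : softmax z y / softmax (z - v) y = T := softmax_div_softmax_sub z v y
  have hlog : -log (softmax (z - v) y) + log (softmax z y) = log T := by
    rw [← hratio, log_div (softmax_pos z y).ne' (softmax_pos _ y).ne']
    ring
  have hT_sub_one : T - 1 = ∑ j ∈ Finset.univ.erase y, softmax z j * (exp (v y - v j) - 1) := by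
    rw [Finset.sum_erase _ (by simp)]
    simp only [T, mul_sub, mul_one, Finset.sum_sub_distrib, sum_softmax]
  have hterm : ∀ j ∈ Finset.univ.erase y, softmax z j * (exp (v y - v j) - 1)
      ≤ softmax z j * (v y - v j) + softmax z j * (2 * r ^ 2 * exp (2 * r)) := by
    intro j _
    rw [← mul_add]
    refine mul_le_mul_of_nonneg_left ?_ (softmax_pos z j).le
    have hbound : |v y - v j| ≤ 2 * r := by
      linarith [abs_sub (v y) (v j), hv y, hv j]
    linarith [exp_sub_one_sub_le_of_abs_le hbound]
  have hsum := Finset.sum_le_sum hterm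
  rw [Finset.sum_add_distrib, ← Finset.sum_mul, sum_erase_softmax] at hsum
  linarith [log_le_sub_one_of_pos hT, sum_softmax_sub_ite_mul z v y]

section Matrix

variable {k d : ℕ}

noncomputable def matInner (A B : Fin k → Fin d → ℝ) : ℝ := ∑ c, ∑ j, A c j * B c j

theorem norm1M_nonneg (A : Fin k → Fin d → ℝ) : 0 ≤ norm1M A :=
  Finset.sum_nonneg fun _ _ => Finset.sum_nonneg fun _ _ => abs_nonneg _

theorem norm1V_nonneg (x : Fin d → ℝ) : 0 ≤ norm1V x :=
  Finset.sum_nonneg fun _ _ => abs_nonneg _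

theorem matInner_sub_left (A B C : Fin k → Fin d → ℝ) :
    matInner (A - B) C = matInner A C - matInner B C := by
  simp only [matInner, Pi.sub_apply, sub_mul, Finset.sum_sub_distrib]

theorem abs_apply_apply_le_norm (A : Fin k → Fin d → ℝ) (c : Fin k) (j : Fin d) :
    |A c j| ≤ ‖A‖ :=
  (norm_le_pi_norm (A c) j).trans (norm_le_pi_norm A c)

theorem abs_matInner_le (A B : Fin k → Fin d → ℝ) : |matInner A B| ≤ norm1M A * ‖B‖ := by
  unfold matInner norm1M
  rw [Finset.sum_mul]
  refine (Finset.abs_sum_le_sum_abs _ _).trans (Finset.sum_le_sum fun c _ => ?_)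
  rw [Finset.sum_mul]
  refine (Finset.abs_sum_le_sum_abs _ _).trans (Finset.sum_le_sum fun j _ => ?_)
  rw [abs_mul]
  exact mul_le_mul_of_nonneg_left (abs_apply_apply_le_norm B c j) (abs_nonneg _)

theorem norm1M_add_le (A B : Fin k → Fin d → ℝ) : norm1M (A + B) ≤ norm1M A + norm1M B := by
  simp only [norm1M, ← Finset.sum_add_distrib]
  exact Finset.sum_le_sum fun c _ => Finset.sum_le_sum fun j _ => abs_add_le _ _

theorem logits_sub_smul (W Δ : Fin k → Fin d → ℝ) (η : ℝ) (x : Fin d → ℝ) :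
    logits (W - η • Δ) x = logits W x - η • logits Δ x := by
  ext c
  simp only [logits, Pi.sub_apply, Pi.smul_apply, smul_eq_mul, sub_mul, Finset.sum_sub_distrib,
    Finset.mul_sum, mul_assoc]

theorem abs_logits_le (A : Fin k → Fin d → ℝ) (x : Fin d → ℝ) (c : Fin k) :
    |logits A x c| ≤ ‖A‖ * norm1V x := by
  unfold logits norm1V
  rw [Finset.mul_sum]
  refine (Finset.abs_sum_le_sum_abs _ _).trans (Finset.sum_le_sum fun j _ => ?_)
  rw [abs_mul]
  exact mul_le_mul_of_nonneg_right (abs_apply_apply_le_norm A c j) (abs_nonneg _)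

end Matrix

section Sample

variable {k d : ℕ} (x : Fin d → ℝ) (y : Fin k) (W : Fin k → Fin d → ℝ)

theorem matInner_sampleGrad (A : Fin k → Fin d → ℝ) :
    matInner (sampleGrad x y W) A
      = ∑ c, (softmax (logits W x) c - if c = y then 1 else 0) * logits A x c := by
  simp only [matInner, sampleGrad, logits, Finset.mul_sum, mul_assoc, mul_comm (x _)]

theorem norm1M_sampleGrad :
    norm1M (sampleGrad x y W) = 2 * (1 - softmax (logits W x) y) * norm1V x := by
  simp only [norm1M, norm1V, sampleGrad, abs_mul, ← Finset.sum_mul_sum, sum_abs_softmax_sub_ite]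

theorem marginMin_mul_le (hk : 2 ≤ k) (A : Fin k → Fin d → ℝ) :
    marginMin hk A x y * (1 - softmax (logits W x) y) ≤ -matInner (sampleGrad x y W) A := by
  rw [matInner_sampleGrad, sum_softmax_sub_ite_mul, neg_neg, ← sum_erase_softmax,
    Finset.mul_sum]
  exact Finset.sum_le_sum fun c hc => by
    rw [mul_comm]
    exact mul_le_mul_of_nonneg_left (Finset.inf'_le _ hc) (softmax_pos _ c).le

end Sample

section Classifier

variable {n k d : ℕ}

noncomputable def batchWeight (B : Finset (Fin n)) (b : ℕ) (i : Fin n) : ℝ :=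
  if i ∈ B then 1 / b else 0

/-- Both `gradCE` (weights `1/n`) and `batchGrad` (weights `batchWeight B b`) are of this form. -/
noncomputable def weightedGrad (x : Fin n → Fin d → ℝ) (y : Fin n → Fin k) (w : Fin n → ℝ)
    (W : Fin k → Fin d → ℝ) : Fin k → Fin d → ℝ :=
  fun c j => ∑ i, w i * sampleGrad (x i) (y i) W c j

variable (x : Fin n → Fin d → ℝ) (y : Fin n → Fin k)

theorem gradCE_eq_weightedGrad (W : Fin k → Fin d → ℝ) :
    gradCE x y W = weightedGrad x y (fun _ => 1 / n) W := by
  ext c j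
  simp only [gradCE, weightedGrad, Finset.mul_sum]

theorem batchGrad_eq_weightedGrad (B : Finset (Fin n)) (b : ℕ) (W : Fin k → Fin d → ℝ) :
    batchGrad x y B b W = weightedGrad x y (batchWeight B b) W := by
  ext c j
  simp only [batchGrad, weightedGrad, batchWeight, ite_mul, zero_mul, Finset.sum_ite_mem,
    Finset.univ_inter, Finset.mul_sum]

theorem weightedGrad_sub (w w' : Fin n → ℝ) (W : Fin k → Fin d → ℝ) :
    weightedGrad x y w W - weightedGrad x y w' W = weightedGrad x y (w - w') W := by
  ext c j
  simp only [weightedGrad, Pi.sub_apply, sub_mul, Finset.sum_sub_distrib]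

theorem matInner_weightedGrad (w : Fin n → ℝ) (W A : Fin k → Fin d → ℝ) :
    matInner (weightedGrad x y w W) A = ∑ i, w i * matInner (sampleGrad (x i) (y i) W) A := by
  simp only [matInner, weightedGrad, Finset.sum_mul, Finset.mul_sum, mul_assoc]
  exact (Finset.sum_congr rfl fun c _ => Finset.sum_comm).trans Finset.sum_comm

theorem norm1M_weightedGrad_le (w : Fin n → ℝ) (W : Fin k → Fin d → ℝ) :
    norm1M (weightedGrad x y w W) ≤ ∑ i, |w i| * norm1M (sampleGrad (x i) (y i) W) := by
  calc norm1M (weightedGrad x y w W)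
      ≤ ∑ c, ∑ j, ∑ i, |w i| * |sampleGrad (x i) (y i) W c j| :=
        Finset.sum_le_sum fun c _ => Finset.sum_le_sum fun j _ =>
          (Finset.abs_sum_le_sum_abs _ _).trans_eq (by simp only [abs_mul])
    _ = ∑ i, |w i| * norm1M (sampleGrad (x i) (y i) W) := by
        simp only [norm1M, Finset.mul_sum]
        exact (Finset.sum_congr rfl fun c _ => Finset.sum_comm).trans Finset.sum_comm

theorem proxyG_pos (hn : 1 ≤ n) (hk : 2 ≤ k) (W : Fin k → Fin d → ℝ) : 0 < proxyG x y W := by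
  have : NeZero n := NeZero.of_pos hn
  exact mul_pos (by simp; omega) (Finset.sum_pos
    (fun i _ => sub_pos.mpr (softmax_lt_one hk _ _)) Finset.univ_nonempty)

theorem lossCE_sub_smul_le {R η : ℝ} (hx : ∀ i, norm1V (x i) ≤ R) (hη : 0 ≤ η)
    (W Δ : Fin k → Fin d → ℝ) (hΔ : ‖Δ‖ ≤ 1) :
    lossCE x y (W - η • Δ)
      ≤ lossCE x y W - η * matInner (gradCE x y W) Δ
        + 2 * (η * R) ^ 2 * exp (2 * (η * R)) * proxyG x y W := by
  set S := fun i => softmax (logits W (x i))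
  have hsample (i : Fin n) : -log (softmax (logits (W - η • Δ) (x i)) (y i))
      ≤ -log (S i (y i)) - η * matInner (sampleGrad (x i) (y i) W) Δ
        + 2 * (η * R) ^ 2 * exp (2 * (η * R)) * (1 - S i (y i)) := by
    have hbound (c : Fin k) : |(η • logits Δ (x i)) c| ≤ η * R := by
      rw [Pi.smul_apply, smul_eq_mul, abs_mul, abs_of_nonneg hη]
      refine mul_le_mul_of_nonneg_left ((abs_logits_le Δ (x i) c).trans ?_) hη
      exact (mul_le_of_le_one_left (norm1V_nonneg _) hΔ).trans (hx i)
    convert neg_log_softmax_sub_le (logits W (x i)) _ (y i) hbound using 3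
    · rw [logits_sub_smul]
    · simp only [matInner_sampleGrad, Pi.smul_apply, smul_eq_mul, Finset.mul_sum]
      exact Finset.sum_congr rfl fun c _ => by ring
  calc lossCE x y (W - η • Δ)
      = 1 / n * ∑ i, -log (softmax (logits (W - η • Δ) (x i)) (y i)) := by
        simp only [lossCE, Finset.sum_neg_distrib]; ring
    _ ≤ 1 / n * ∑ i, (-log (S i (y i)) - η * matInner (sampleGrad (x i) (y i) W) Δ
          + 2 * (η * R) ^ 2 * exp (2 * (η * R)) * (1 - S i (y i))) := by
        gcongr with i
        exact hsample i
    _ = _ := by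
        simp only [lossCE, proxyG, gradCE_eq_weightedGrad, matInner_weightedGrad,
          Finset.sum_add_distrib, Finset.sum_sub_distrib, Finset.sum_neg_distrib, ← Finset.mul_sum]
        ring

theorem abs_one_div_sub_batchWeight_le {m b : ℕ} (hm : 1 ≤ m) (hb : 1 ≤ b) (hnb : n = m * b)
    {B : Finset (Fin n)} (hB : B.card = b) (i : Fin n) :
    |1 / (n : ℝ) - batchWeight B b i| ≤ ((m : ℝ) - 1) / n := by
  have hb' : (0 : ℝ) < b := by exact_mod_cast hb
  have hn' : (n : ℝ) = m * b := by exact_mod_cast hnb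
  unfold batchWeight
  split_ifs with hi
  · rw [hn', abs_sub_comm, abs_of_nonneg] <;> field_simp <;> norm_num [hm]
  · have hlt : b < n := hB ▸ Finset.card_lt_univ_of_notMem hi |>.trans_eq (by simp)
    have hm2 : (2 : ℝ) ≤ m := by exact_mod_cast (by nlinarith : 2 ≤ m)
    rw [sub_zero, abs_of_nonneg (by positivity)]
    gcongr
    linarith

theorem norm1M_gradCE_sub_batchGrad_le {R : ℝ} (hx : ∀ i, norm1V (x i) ≤ R) {m b : ℕ}
    (hm : 1 ≤ m) (hb : 1 ≤ b) (hnb : n = m * b) {B : Finset (Fin n)} (hB : B.card = b)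
    (W : Fin k → Fin d → ℝ) :
    norm1M (gradCE x y W - batchGrad x y B b W) ≤ 2 * R * ((m : ℝ) - 1) * proxyG x y W := by
  rw [gradCE_eq_weightedGrad, batchGrad_eq_weightedGrad, weightedGrad_sub]
  refine (norm1M_weightedGrad_le x y _ W).trans ?_
  simp only [proxyG, Finset.mul_sum]
  refine Finset.sum_le_sum fun i _ => ?_
  have hτ : 0 ≤ 2 * (1 - softmax (logits W (x i)) (y i)) := by
    linarith [softmax_le_one (logits W (x i)) (y i)]
  have hm' : 0 ≤ ((m : ℝ) - 1) / n := div_nonneg (by simp [hm]) n.cast_nonneg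
  rw [norm1M_sampleGrad, Pi.sub_apply]
  calc |1 / (n : ℝ) - batchWeight B b i|
        * (2 * (1 - softmax (logits W (x i)) (y i)) * norm1V (x i))
      ≤ ((m : ℝ) - 1) / n * (2 * (1 - softmax (logits W (x i)) (y i)) * R) := by
        refine mul_le_mul (abs_one_div_sub_batchWeight_le hm hb hnb hB i)
          (mul_le_mul_of_nonneg_left (hx i) hτ) ?_ hm'
        exact mul_nonneg hτ (norm1V_nonneg _)
    _ = _ := by ring

theorem dataMargin_mul_proxyG_le (hn : 1 ≤ n) (hk : 2 ≤ k) (A W : Fin k → Fin d → ℝ) :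
    dataMargin hn hk x y A * proxyG x y W ≤ -matInner (gradCE x y W) A := by
  calc dataMargin hn hk x y A * proxyG x y W
      = 1 / n * ∑ i, dataMargin hn hk x y A * (1 - softmax (logits W (x i)) (y i)) := by
        rw [proxyG, mul_left_comm, Finset.mul_sum]
    _ ≤ 1 / n * ∑ i, -matInner (sampleGrad (x i) (y i) W) A := by
        gcongr with i
        exact (mul_le_mul_of_nonneg_right (Finset.inf'_le _ (Finset.mem_univ i))
          (sub_nonneg.mpr (softmax_le_one _ _))).trans (marginMin_mul_le _ _ W hk A)
    _ = -matInner (gradCE x y W) A := by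
        rw [gradCE_eq_weightedGrad, matInner_weightedGrad, Finset.sum_neg_distrib, mul_neg,
          Finset.mul_sum]

theorem gammaMax_mul_proxyG_le (hn : 1 ≤ n) (hk : 2 ≤ k) (W : Fin k → Fin d → ℝ) :
    gammaMax hn hk x y * proxyG x y W ≤ norm1M (gradCE x y W) := by
  have hG := proxyG_pos x y hn hk W
  rw [← le_div_iff₀ hG]
  refine csSup_le ⟨_, 0, by simp, rfl⟩ ?_
  rintro _ ⟨A, hA, rfl⟩
  rw [le_div_iff₀ hG]
  calc dataMargin hn hk x y A * proxyG x y W ≤ -matInner (gradCE x y W) A :=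
        dataMargin_mul_proxyG_le x y hn hk A W
    _ ≤ norm1M (gradCE x y W) * ‖A‖ := (neg_le_abs _).trans (abs_matInner_le _ _)
    _ ≤ norm1M (gradCE x y W) :=
        mul_le_of_le_one_right (norm1M_nonneg _) hA

end Classifier

theorem stochastic_steepest_descent_lemma_general (n k d : ℕ)
    (hn : 1 ≤ n) (hk : 2 ≤ k)
    (x : Fin n → Fin d → ℝ) (y : Fin n → Fin k)
    (R : ℝ) (hR : 0 < R) (hx : ∀ i, norm1V (x i) ≤ R)
    (m b : ℕ) (hm : 1 ≤ m) (hb : 1 ≤ b) (hnb : n = m * b)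
    (η₀ η : ℝ) (hη : 0 < η) (hηle : η ≤ η₀)
    (W : Fin k → Fin d → ℝ)
    (B : Finset (Fin n)) (hB : B.card = b)
    (Δ : Fin k → Fin d → ℝ) (hΔnorm : ‖Δ‖ ≤ 1)
    (hΔopt : ∑ cc, ∑ j, batchGrad x y B b W cc j * Δ cc j
      = norm1M (batchGrad x y B b W)) :
    lossCE x y (W - η • Δ)
      ≤ lossCE x y W
        - η * (gammaMax hn hk x y - 4 * ((m : ℝ) - 1) * R
            - 2 * η * R ^ 2 * Real.exp (2 * R * η₀)) * proxyG x y W := by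
  set D := gradCE x y W - batchGrad x y B b W
  have hnoise : norm1M D ≤ 2 * R * ((m : ℝ) - 1) * proxyG x y W :=
    norm1M_gradCE_sub_batchGrad_le x y hx hm hb hnb hB W
  have hinner_noise : -norm1M D ≤ matInner D Δ := neg_le_of_abs_le <|
    (abs_matInner_le D Δ).trans (mul_le_of_le_one_right (norm1M_nonneg D) hΔnorm)
  have hsplit : norm1M (gradCE x y W) ≤ norm1M (batchGrad x y B b W) + norm1M D := by
    simpa [D] using norm1M_add_le (batchGrad x y B b W) D
  have hdescent : (gammaMax hn hk x y - 4 * ((m : ℝ) - 1) * R) * proxyG x y W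
      ≤ matInner (gradCE x y W) Δ := by
    have hopt : matInner (batchGrad x y B b W) Δ = norm1M (batchGrad x y B b W) := hΔopt
    linarith [matInner_sub_left (gradCE x y W) (batchGrad x y B b W) Δ,
      gammaMax_mul_proxyG_le x y hn hk W]
  have hG := (proxyG_pos x y hn hk W).le
  have hexp : exp (2 * (η * R)) ≤ exp (2 * R * η₀) := exp_le_exp.mpr (by nlinarith)
  have hstep := lossCE_sub_smul_le x y hx hη.le W Δ hΔnorm
  have hfirst := mul_le_mul_of_nonneg_left hdescent hη.le
  have hsecond := mul_le_mul_of_nonneg_left hexp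
    (by positivity : 0 ≤ 2 * (η * R) ^ 2 * proxyG x y W)
  linarith

/-- descent inequality for stochastic `ℓ_∞` steepest descent without momentum:
`L(W − ηΔ) ≤ L(W) − η (γ − 4(m−1)R − 2η R² e^{2Rη₀}) G(W)`. -/
theorem stochastic_steepest_descent_lemma (n k d : ℕ)
    (hn : 1 ≤ n) (hk : 2 ≤ k) (hd : 1 ≤ d)
    (x : Fin n → Fin d → ℝ) (y : Fin n → Fin k)
    (R : ℝ) (hR : 0 < R) (hx : ∀ i, norm1V (x i) ≤ R)
    (m b : ℕ) (hm : 1 ≤ m) (hb : 1 ≤ b) (hnb : n = m * b)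
    (η₀ η : ℝ) (hη₀ : 0 < η₀) (hη : 0 < η) (hηle : η ≤ η₀)
    (W : Fin k → Fin d → ℝ)
    (B : Finset (Fin n)) (hB : B.card = b)
    (Δ : Fin k → Fin d → ℝ) (hΔnorm : ‖Δ‖ ≤ 1)
    (hΔopt : ∑ cc, ∑ j, batchGrad x y B b W cc j * Δ cc j
      = norm1M (batchGrad x y B b W)) :
    lossCE x y (W - η • Δ)
      ≤ lossCE x y W
        - η * (gammaMax hn hk x y - 4 * ((m : ℝ) - 1) * R
            - 2 * η * R ^ 2 * Real.exp (2 * R * η₀)) * proxyG x y W :=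
  stochastic_steepest_descent_lemma_general n k d hn hk x y R hR hx m b hm hb hnb η₀ η hη hηle W B
    hB Δ hΔnorm hΔopt
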